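/- Let 1 ≤ d ≤ r and 0 ≤ k ≤ r−1 be integers with d even. Then last(ĝ^{r,d}_k) > 0 whenever 2k > d + r, and last(ĝ^{r,d}_k) < 0 whenever 2k < d + r. Moreover, if r is even, then last(ĝ^{r,d}_{(d+r)/2}) = 0. -/

import Mathlib

/-!
`vC r d i` is the coefficient of `x^i` in `(1 + x + ⋯ + x^r)^d`. It is symmetric about `dr/2`,
and for `d ≥ 2`, `r ≥ 1` it strictly increases up to the middle: multiplying by `1 + ⋯ + x^r`
turns the step `C(d+1, i+1) - C(d+1, i)` into `C(d, i+1) - C(d, i-r)`, and `i + 1` is closer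
to the centre than `i - r`. Hence `vC r d j < vC r d i` whenever `i` is strictly closer to the
centre than `j`. With `d = 2m` and `N = d(r-1)`, the last entry of `ĝ^{r,d}_k` is
`C(r-1, d, (m+1)r-k) - C(r-1, d, mr-k)`, and twice the distances of these arguments from `N/2`
are `|2m + 2r - 2k|` and `|2m - 2k|`: the first is smaller exactly when `2k > d + r`, and they
are equal when `2k = d + r`.
-/

/-- `vC r d i` is the number of tuples `(u₁,…,u_d) ∈ ℤ^d` with `0 ≤ uₗ ≤ r` for all `l`
and `u₁ + ⋯ + u_d = i`.  For `d = 0` this is `1` if `i = 0` and `0` otherwise. -/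
def vC (r d : ℕ) (i : ℤ) : ℕ :=
  (Finset.univ.filter fun u : Fin d → Fin (r + 1) => (∑ l, ((u l : ℕ) : ℤ)) = i).card

/-- `gHat r d k i` is the `(i+1)`-st entry (`0 ≤ i ≤ ⌊d/2⌋+1`) of the vector
`ĝ^{r,d}_k ∈ ℤ^{⌊d/2⌋+2}`, defined by `g₀ = C(r−1,d,−k)` and
`g_i = C(r−1,d,ir−k) − C(r−1,d,(i−1)r−k)` for `i ≥ 1`; for `k ≥ r` the vector
`ĝ^{r,d}_k` is the zero vector.  The vector `g^{r,d}_k ∈ ℤ^{⌊d/2⌋+1}` is obtained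
from `ĝ^{r,d}_k` by deleting its last entry, so its entries are `gHat r d k i`
for `0 ≤ i ≤ ⌊d/2⌋`; `last (g^{r,d}_k) = gHat r d k (d/2)` and
`last (ĝ^{r,d}_k) = gHat r d k (d/2 + 1)`. -/
def gHat (r d k : ℕ) (i : ℕ) : ℤ :=
  if r ≤ k then 0
  else if i = 0 then (vC (r - 1) d (-(k : ℤ)) : ℤ)
  else (vC (r - 1) d ((i : ℤ) * (r : ℤ) - (k : ℤ)) : ℤ)
       - (vC (r - 1) d (((i : ℤ) - 1) * (r : ℤ) - (k : ℤ)) : ℤ)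

open Finset

section vC

variable {r d : ℕ} {i j : ℤ}

lemma vC_zero_right (r : ℕ) (i : ℤ) : vC r 0 i = if i = 0 then 1 else 0 := by
  rcases eq_or_ne i 0 with h | h <;> simp [vC, h, eq_comm]

lemma vC_succ (r d : ℕ) (i : ℤ) : vC r (d + 1) i = ∑ a : Fin (r + 1), vC r d (i - a) := by
  unfold vC
  rw [card_eq_sum_card_fiberwise (f := fun u : Fin (d + 1) → Fin (r + 1) => u 0)
    (fun _ _ => mem_univ _)]
  refine sum_congr rfl fun a _ => card_nbij' Fin.tail (fun v => Fin.cons a v) ?_ ?_ ?_ ?_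
  · intro u hu
    simp only [coe_filter, mem_filter, mem_univ, true_and, Set.mem_ofPred_eq] at hu ⊢
    rw [Fin.sum_univ_succ, hu.2] at hu
    exact eq_sub_of_add_eq' hu.1
  · intro v hv
    simp only [coe_filter, mem_filter, mem_univ, true_and, Set.mem_ofPred_eq] at hv ⊢
    simp [Fin.sum_univ_succ, hv]
  · intro u hu
    simp only [coe_filter, mem_filter, mem_univ, true_and, Set.mem_ofPred_eq] at hu
    rw [← hu.2]
    exact Fin.cons_self_tail u
  · intro v _
    exact Fin.tail_cons _ _

lemma sum_val_mem_Icc (u : Fin d → Fin (r + 1)) : ∑ l, ((u l : ℕ) : ℤ) ∈ Set.Icc 0 ((d : ℤ) * r) := by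
  refine ⟨sum_nonneg fun _ _ => by positivity, ?_⟩
  calc ∑ l, ((u l : ℕ) : ℤ) ≤ ∑ _l : Fin d, (r : ℤ) :=
        sum_le_sum fun l _ => by exact_mod_cast Nat.le_of_lt_succ (u l).isLt
    _ = d * r := by simp

lemma vC_eq_zero (h : i ∉ Set.Icc 0 ((d : ℤ) * r)) : vC r d i = 0 := by
  rw [vC, card_eq_zero, filter_eq_empty_iff]
  rintro u - rfl
  exact h (sum_val_mem_Icc u)

lemma vC_pos (h : i ∈ Set.Icc 0 ((d : ℤ) * r)) : 0 < vC r d i := by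
  induction d generalizing i with
  | zero =>
    simp_all [vC_zero_right, le_antisymm_iff]
  | succ d ih =>
    obtain ⟨hi0, hi⟩ := h
    rw [vC_succ]
    let a : Fin (r + 1) := ⟨min r i.toNat, by omega⟩
    have ha : ((a : ℕ) : ℤ) = min (r : ℤ) i := by simp [a]; omega
    refine lt_of_lt_of_le (ih ⟨?_, ?_⟩)
      (single_le_sum (f := fun a : Fin (r + 1) => vC r d (i - a)) (fun _ _ => Nat.zero_le _)
        (mem_univ a))
    · omega
    · have : 0 ≤ (d : ℤ) * r := by positivity
      rw [ha, Nat.cast_succ, add_one_mul] at *; omega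

lemma vC_symm (r d : ℕ) (i : ℤ) : vC r d (d * r - i) = vC r d i := by
  induction d generalizing i with
  | zero => simp [vC_zero_right]
  | succ d ih =>
    rw [vC_succ, vC_succ]
    refine Fintype.sum_equiv Fin.revPerm _ _ fun a => ?_
    rw [← ih, Fin.revPerm_apply, Fin.val_rev]
    congr 1
    push_cast [Nat.le_of_lt_succ a.isLt]
    ring

lemma vC_succ_add_one_add (r d : ℕ) (i : ℤ) :
    vC r (d + 1) (i + 1) + vC r d (i - r) = vC r (d + 1) i + vC r d (i + 1) := by
  have hhead : vC r (d + 1) (i + 1) = vC r d (i + 1) + ∑ a : Fin r, vC r d (i - a) := by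
    rw [vC_succ, Fin.sum_univ_succ]
    congr 1
    · simp
    · refine sum_congr rfl fun a _ => ?_
      rw [Fin.val_succ]
      push_cast
      ring_nf
  have htail : vC r (d + 1) i = ∑ a : Fin r, vC r d (i - a) + vC r d (i - r) := by
    rw [vC_succ, Fin.sum_univ_castSucc]
    simp
  omega

lemma vC_lt_of_abs_lt (hmono : StrictMonoOn (vC r d) (Set.Icc 0 (d * r / 2)))
    (hi : i ∈ Set.Icc 0 ((d : ℤ) * r)) (h : |2 * i - d * r| < |2 * j - d * r|) :
    vC r d j < vC r d i := by
  by_cases hj : j ∈ Set.Icc 0 ((d : ℤ) * r)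
  · have hfold (x : ℤ) : ∃ y, vC r d y = vC r d x ∧ 2 * y = d * r - |2 * x - d * r| := by
      rcases abs_cases (2 * x - d * r) with ⟨hx, -⟩ | ⟨hx, -⟩
      · exact ⟨d * r - x, vC_symm r d x, by omega⟩
      · exact ⟨x, rfl, by omega⟩
    obtain ⟨i', hi', hi'2⟩ := hfold i
    obtain ⟨j', hj', hj'2⟩ := hfold j
    have hi_abs : |2 * i - d * r| ≤ d * r := abs_le.mpr ⟨by linarith [hi.1], by linarith [hi.2]⟩
    have hj_abs : |2 * j - d * r| ≤ d * r := abs_le.mpr ⟨by linarith [hj.1], by linarith [hj.2]⟩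
    have := abs_nonneg (2 * i - d * r)
    rw [← hi', ← hj']
    refine hmono ⟨?_, ?_⟩ ⟨?_, ?_⟩ ?_ <;> omega
  · rw [vC_eq_zero hj]
    exact vC_pos hi

lemma strictMonoOn_vC_succ
    (hstep : ∀ i : ℤ, 0 ≤ i → 2 * (i + 1) ≤ ((d + 1 : ℕ) : ℤ) * r →
      vC r d (i - r) < vC r d (i + 1)) :
    StrictMonoOn (vC r (d + 1)) (Set.Icc 0 (((d + 1 : ℕ) : ℤ) * r / 2)) := by
  refine strictMonoOn_of_lt_add_one Set.ordConnected_Icc fun i _ hi hi1 => ?_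
  have := vC_succ_add_one_add r d i
  have := hstep i hi.1 (by have := hi1.2; omega)
  omega

lemma vC_strictMonoOn (hr : 1 ≤ r) (hd : 2 ≤ d) :
    StrictMonoOn (vC r d) (Set.Icc 0 (d * r / 2)) := by
  induction d, hd using Nat.le_induction with
  | base =>
    refine strictMonoOn_vC_succ (d := 1) fun i hi0 hi => ?_
    push_cast at hi
    rw [vC_eq_zero (by simp; omega)]
    exact vC_pos ⟨by omega, by simp; omega⟩
  | succ d hd ih =>
    refine strictMonoOn_vC_succ fun i hi0 hi => vC_lt_of_abs_lt ih ?_ ?_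
    · have : (r : ℤ) ≤ d * r := le_mul_of_one_le_left (by positivity) (by omega)
      push_cast at hi
      constructor <;> linarith
    · push_cast at hi
      rw [abs_of_neg (by linarith : 2 * (i - r) - d * r < 0), abs_lt]
      constructor <;> linarith

end vC

lemma gHat_add_one {s d k : ℕ} (hk : k ≤ s) (i : ℕ) :
    gHat (s + 1) d k (i + 1) =
      vC s d ((i + 1) * (s + 1) - k) - vC s d (i * (s + 1) - k) := by
  simp only [gHat, if_neg (show ¬s + 1 ≤ k by omega), Nat.add_one_ne_zero, if_false,
    Nat.add_sub_cancel]
  push_cast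
  ring_nf

/-- Let `1 ≤ d ≤ r` and `0 ≤ k ≤ r−1` with `d` even.  Then `last(ĝ^{r,d}_k) > 0`
whenever `2k > d + r`, and `last(ĝ^{r,d}_k) < 0` whenever `2k < d + r`.  Moreover,
if `r` is even, then `last(ĝ^{r,d}_{(d+r)/2}) = 0`. -/
theorem stmt_14 (r d k : ℕ) (hd : 1 ≤ d) (hdr : d ≤ r) (heven : Even d) (hk : k ≤ r - 1) :
    (d + r < 2 * k → 0 < gHat r d k (d / 2 + 1)) ∧
    (2 * k < d + r → gHat r d k (d / 2 + 1) < 0) ∧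
    (Even r → gHat r d ((d + r) / 2) (d / 2 + 1) = 0) := by
  obtain ⟨m, rfl⟩ := heven
  obtain ⟨s, rfl⟩ : ∃ s, r = s + 1 := ⟨r - 1, by omega⟩
  rw [Nat.add_sub_cancel] at hk
  rw [show (m + m) / 2 = m by omega]
  have hmono := vC_strictMonoOn (r := s) (d := m + m) (by omega) (by omega)
  have hs : (s : ℤ) ≤ m * s := le_mul_of_one_le_left (by positivity) (by omega)
  have hm : (m : ℤ) ≤ m * s := le_mul_of_one_le_right (by positivity) (by omega)
  refine ⟨fun hlt => ?_, fun hlt => ?_, fun ⟨p, hp⟩ => ?_⟩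
  · rw [gHat_add_one hk, sub_pos, Nat.cast_lt]
    refine vC_lt_of_abs_lt hmono ⟨by linarith, by push_cast; linarith⟩ ?_
    push_cast
    rw [abs_of_pos (by linarith), abs_of_neg (by linarith)]
    linarith
  · rw [gHat_add_one hk, sub_neg, Nat.cast_lt]
    refine vC_lt_of_abs_lt hmono ⟨by linarith, by push_cast; linarith⟩ ?_
    push_cast
    rw [abs_lt, abs_of_pos (by linarith)]
    constructor <;> linarith
  · rw [show (m + m + (s + 1)) / 2 = m + p by omega]
    by_cases hmp : s + 1 ≤ m + p
    · simp [gHat, hmp]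
    · rw [gHat_add_one (by omega), sub_eq_zero, ← vC_symm]
      congr 2
      push_cast
      have hp' : (s : ℤ) + 1 = p + p := by exact_mod_cast hp
      linear_combination -hp'
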